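/- arXiv:2501.04127 — 3 statements merged into one kernel-verified Lean document; each statement's English description precedes it below -/
import Mathlib

section
/- Let X be a compact Hausdorff space and let γ = (γ_1, …, γ_N) be an iterated function system on X such that every γ_k is a topological embedding. Let 𝕏 ⊆ X be dense, completely invariant under γ, and comeager in X, with γ_1(𝕏), …, γ_N(𝕏) pairwise disjoint and each restriction γ_k|_𝕏 injective. Assume there exists a dense open subset U of X such that γ_1(U), …, γ_N(U) are pairwise disjoint open subsets of X contained in U, and that 𝕏 ⊆ U. Assume γ is essentially free. Define S := (X ∖ 𝕏) ∪ ⋃_{𝐤 ≠ 𝐥} {x ∈ X : γ_𝐤(x) = γ_𝐥(x)}, the union over all pairs of distinct finite index sequences, and let 𝕏' be the complement in X of the smallest completely γ-invariant subset of X containing S. Then: (1) 𝕏' is dense in X and completely invariant under γ; (2) γ_1(𝕏'), …, γ_N(𝕏') are pairwise disjoint; (3) each restriction γ_k|_{𝕏'} is injective; and (4) 𝕏' is disjoint from ⋃_{𝐣 ≠ 𝐤} {x ∈ X : γ_𝐣(x) = γ_𝐤(x)}. -/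
/-- A subset `S` of `X` is completely invariant under the iterated function system `γ`
if `γ k '' S ⊆ S` and `γ k ⁻¹' S ⊆ S` for every index `k`. -/
def CompletelyInvariant {X : Type*} {N : ℕ} (γ : Fin N → X → X) (S : Set X) : Prop :=
  ∀ k : Fin N, γ k '' S ⊆ S ∧ γ k ⁻¹' S ⊆ S

/-- For a finite sequence `𝐤 = (k_n, …, k_1)` of indices, encoded as the list
`[k_n, …, k_1]`, `seqComp γ 𝐤` is the composition `γ_{k_n} ∘ ⋯ ∘ γ_{k_1}`
(the identity for the empty sequence). -/
def seqComp {X : Type*} {N : ℕ} (γ : Fin N → X → X) (l : List (Fin N)) : X → X :=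
  l.foldr (fun k f => γ k ∘ f) id

/-- An iterated function system `γ` is essentially free if for all distinct finite index
sequences `𝐤` and `𝐥` the coincidence set `{x | γ_𝐤(x) = γ_𝐥(x)}` is nowhere dense. -/
def EssentiallyFree {X : Type*} [TopologicalSpace X] {N : ℕ} (γ : Fin N → X → X) : Prop :=
  ∀ k l : List (Fin N), k ≠ l → IsNowhereDense {x : X | seqComp γ k x = seqComp γ l x}

/-!
`S` is meagre: `X ∖ 𝕏` by assumption and each coincidence set because `γ` is essentially free.
Images of meagre sets under the embeddings `γ k` are meagre, and so are preimages, because on the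
comeagre set `U` each `γ k` is an open embedding. Closing `S` under countably many images and
preimages therefore gives a completely invariant meagre set, which contains the invariant hull of
`S`. Its complement `𝕏'` is dense by Baire's theorem, lies inside `𝕏`, and avoids all
coincidence sets.
-/

open Set Topology

section Meagre

variable {X Y : Type*} [TopologicalSpace X] [TopologicalSpace Y]

theorem Topology.IsInducing.isMeagre_preimage {f : X → Y} (hf : IsInducing f) {U : Set X}
    (hU : IsMeagre Uᶜ) (hfU : IsOpen (f '' U)) {s : Set Y} (hs : IsMeagre s) :
    IsMeagre (f ⁻¹' s) := by
  have hrestrict : IsInducing (f ∘ ((↑) : U → X)) := hf.comp IsInducing.subtypeVal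
  have hopen : IsOpenMap (f ∘ ((↑) : U → X)) :=
    hrestrict.isOpenMap (by rwa [range_comp, Subtype.range_coe])
  have hU_part : IsMeagre (((↑) : U → X) '' ((f ∘ (↑)) ⁻¹' s)) :=
    IsMeagre.image_val (hs.preimage_of_isOpenMap hrestrict.continuous hopen)
  exact (hU_part.union hU).mono fun x hx =>
    (em (x ∈ U)).imp (fun hxU => ⟨⟨x, hxU⟩, hx, rfl⟩) id

end Meagre

section CompletelyInvariant

variable {X : Type*} {N : ℕ} {γ : Fin N → X → X}

theorem CompletelyInvariant.compl {T : Set X} (hT : CompletelyInvariant γ T) :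
    CompletelyInvariant γ Tᶜ := fun k =>
  ⟨by rintro _ ⟨x, hx, rfl⟩ hxT; exact hx ((hT k).2 hxT),
   fun _ hx hxT => hx ((hT k).1 ⟨_, hxT, rfl⟩)⟩

theorem CompletelyInvariant.sInter {𝒯 : Set (Set X)}
    (h𝒯 : ∀ T ∈ 𝒯, CompletelyInvariant γ T) : CompletelyInvariant γ (⋂₀ 𝒯) := fun k =>
  ⟨by
    rintro _ ⟨x, hx, rfl⟩
    exact mem_sInter.2 fun T hT => (h𝒯 T hT k).1 ⟨x, hx T hT, rfl⟩,
   fun _ hx => mem_sInter.2 fun T hT => (h𝒯 T hT k).2 (hx T hT)⟩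

theorem completelyInvariant_sInter_superset (γ : Fin N → X → X) (S : Set X) :
    CompletelyInvariant γ (⋂₀ {T | CompletelyInvariant γ T ∧ S ⊆ T}) :=
  CompletelyInvariant.sInter fun _ hT => hT.1

def saturationStep (γ : Fin N → X → X) (A : Set X) : Set X :=
  A ∪ (⋃ k, γ k '' A) ∪ ⋃ k, γ k ⁻¹' A

theorem completelyInvariant_iUnion_iterate_saturationStep (γ : Fin N → X → X) (A : Set X) :
    CompletelyInvariant γ (⋃ n, (saturationStep γ)^[n] A) := by
  intro k
  constructor
  · rintro _ ⟨x, hx, rfl⟩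
    obtain ⟨n, hn⟩ := mem_iUnion.1 hx
    refine mem_iUnion.2 ⟨n + 1, ?_⟩
    rw [Function.iterate_succ_apply']
    exact Or.inl (Or.inr (mem_iUnion.2 ⟨k, x, hn, rfl⟩))
  · intro x hx
    obtain ⟨n, hn⟩ := mem_iUnion.1 hx
    refine mem_iUnion.2 ⟨n + 1, ?_⟩
    rw [Function.iterate_succ_apply']
    exact Or.inr (mem_iUnion.2 ⟨k, hn⟩)

variable [TopologicalSpace X]

theorem IsMeagre.sInter_completelyInvariant_superset
    (himage : ∀ k s, IsMeagre s → IsMeagre (γ k '' s))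
    (hpreimage : ∀ k s, IsMeagre s → IsMeagre (γ k ⁻¹' s)) {S : Set X} (hS : IsMeagre S) :
    IsMeagre (⋂₀ {T | CompletelyInvariant γ T ∧ S ⊆ T}) := by
  have hstep : ∀ n, IsMeagre ((saturationStep γ)^[n] S) := by
    intro n
    induction n with
    | zero => exact hS
    | succ n ih =>
      rw [Function.iterate_succ_apply']
      exact (ih.union (isMeagre_iUnion fun k => himage k _ ih)).union
        (isMeagre_iUnion fun k => hpreimage k _ ih)
  refine (isMeagre_iUnion hstep).mono (sInter_subset_of_mem ⟨?_, ?_⟩)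
  · exact completelyInvariant_iUnion_iterate_saturationStep γ S
  · exact subset_iUnion_of_subset 0 subset_rfl

theorem EssentiallyFree.isMeagre_iUnion_coincidence (hfree : EssentiallyFree γ) :
    IsMeagre (⋃ (k : List (Fin N)) (l : List (Fin N)) (_ : k ≠ l),
      {x : X | seqComp γ k x = seqComp γ l x}) :=
  isMeagre_iUnion fun k => isMeagre_iUnion fun l => isMeagre_iUnion fun hkl =>
    (hfree k l hkl).isMeagre

end CompletelyInvariant

theorem conditions_for_complement_general {X : Type*} [TopologicalSpace X] [CompactSpace X]
    [T2Space X] {N : ℕ} (γ : Fin N → X → X) (hemb : ∀ k, Topology.IsEmbedding (γ k))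
    (𝕏 : Set X) (hcomeager : IsMeagre 𝕏ᶜ)
    (hdisj : ∀ j k : Fin N, j ≠ k → Disjoint (γ j '' 𝕏) (γ k '' 𝕏))
    (hinj : ∀ k : Fin N, Set.InjOn (γ k) 𝕏)
    (U : Set X) (hUopen : IsOpen U) (hUdense : Dense U)
    (himgopen : ∀ k : Fin N, IsOpen (γ k '' U))
    (hfree : EssentiallyFree γ) :
    letI S : Set X := 𝕏ᶜ ∪ ⋃ (k : List (Fin N)) (l : List (Fin N)) (_ : k ≠ l),
      {x : X | seqComp γ k x = seqComp γ l x}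
    letI 𝕏' : Set X := (⋂₀ {T : Set X | CompletelyInvariant γ T ∧ S ⊆ T})ᶜ
    (Dense 𝕏' ∧ CompletelyInvariant γ 𝕏') ∧
      (∀ j k : Fin N, j ≠ k → Disjoint (γ j '' 𝕏') (γ k '' 𝕏')) ∧
      (∀ k : Fin N, Set.InjOn (γ k) 𝕏') ∧
      Disjoint 𝕏' (⋃ (j : List (Fin N)) (k : List (Fin N)) (_ : j ≠ k),
        {x : X | seqComp γ j x = seqComp γ k x}) := by
  set C : Set X := ⋃ (j : List (Fin N)) (k : List (Fin N)) (_ : j ≠ k),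
    {x : X | seqComp γ j x = seqComp γ k x}
  set H : Set X := ⋂₀ {T : Set X | CompletelyInvariant γ T ∧ 𝕏ᶜ ∪ C ⊆ T}
  have hUc : IsMeagre Uᶜ := by
    rw [IsMeagre, compl_compl]
    exact residual_of_dense_open hUopen hUdense
  have hH : IsMeagre H :=
    IsMeagre.sInter_completelyInvariant_superset
      (fun k _ hs => (hemb k).isInducing.isMeagre_image hs)
      (fun k _ hs => (hemb k).isInducing.isMeagre_preimage hUc (himgopen k) hs)
      (hcomeager.union hfree.isMeagre_iUnion_coincidence)
  have hSH : 𝕏ᶜ ∪ C ⊆ H := fun x hx => mem_sInter.2 fun T hT => hT.2 hx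
  have hH𝕏 : Hᶜ ⊆ 𝕏 := compl_subset_comm.1 (subset_union_left.trans hSH)
  refine ⟨⟨dense_of_mem_residual hH, (completelyInvariant_sInter_superset γ _).compl⟩,
    fun j k hjk => (hdisj j k hjk).mono (image_mono hH𝕏) (image_mono hH𝕏),
    fun k => (hinj k).mono hH𝕏,
    disjoint_compl_left_iff_subset.2 (subset_union_right.trans hSH)⟩

/-- Lemma 5.5.10: if `γ` is essentially free, `𝕏'`, the complement of the smallest completely
`γ`-invariant set containing `S := (X ∖ 𝕏) ∪ ⋃_{𝐤 ≠ 𝐥} {x : γ_𝐤(x) = γ_𝐥(x)}`, satisfies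
conditions (I′), (II′), (III′) and (V′). -/
theorem conditions_for_complement {X : Type*} [TopologicalSpace X] [CompactSpace X]
    [T2Space X] {N : ℕ} (γ : Fin N → X → X) (hemb : ∀ k, Topology.IsEmbedding (γ k))
    (𝕏 : Set X) (hdense : Dense 𝕏) (hinv : CompletelyInvariant γ 𝕏)
    (hcomeager : IsMeagre 𝕏ᶜ)
    (hdisj : ∀ j k : Fin N, j ≠ k → Disjoint (γ j '' 𝕏) (γ k '' 𝕏))
    (hinj : ∀ k : Fin N, Set.InjOn (γ k) 𝕏)
    (U : Set X) (hUopen : IsOpen U) (hUdense : Dense U)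
    (himgopen : ∀ k : Fin N, IsOpen (γ k '' U))
    (hUdisj : ∀ j k : Fin N, j ≠ k → Disjoint (γ j '' U) (γ k '' U))
    (hUsub : ∀ k : Fin N, γ k '' U ⊆ U)
    (hXU : 𝕏 ⊆ U)
    (hfree : EssentiallyFree γ) :
    letI S : Set X := 𝕏ᶜ ∪ ⋃ (k : List (Fin N)) (l : List (Fin N)) (_ : k ≠ l),
      {x : X | seqComp γ k x = seqComp γ l x}
    letI 𝕏' : Set X := (⋂₀ {T : Set X | CompletelyInvariant γ T ∧ S ⊆ T})ᶜ
    (Dense 𝕏' ∧ CompletelyInvariant γ 𝕏') ∧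
      (∀ j k : Fin N, j ≠ k → Disjoint (γ j '' 𝕏') (γ k '' 𝕏')) ∧
      (∀ k : Fin N, Set.InjOn (γ k) 𝕏') ∧
      Disjoint 𝕏' (⋃ (j : List (Fin N)) (k : List (Fin N)) (_ : j ≠ k),
        {x : X | seqComp γ j x = seqComp γ k x}) :=
  conditions_for_complement_general γ hemb 𝕏 hcomeager hdisj hinj U hUopen hUdense himgopen hfree
end

section
/- Let X be a compact Hausdorff space, let γ = (γ_1, …, γ_N) be an iterated function system on X such that every γ_k is a topological embedding, and let 𝕏 ⊆ X be dense and completely invariant under γ, with γ_1(𝕏), …, γ_N(𝕏) pairwise disjoint and each restriction γ_k|_𝕏 injective. Fix n ∈ ℕ. For 𝐤 = (k_n, …, k_1) ∈ {1, …, N}^n and x ∈ X write 𝛄_𝐤(x) := (γ_𝐤(x), …, γ_{k_2}(γ_{k_1}(x)), γ_{k_1}(x), x) ∈ X_n. Then for every continuous function f : X_n → ℂ there exists a bounded linear operator T on the Hilbert space ℓ²(𝕏, ℂ) such that T(e_x) = Σ_{𝐤 ∈ {1,…,N}^n} f(𝛄_𝐤(x)) · e_{γ_𝐤(x)} for every x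 ∈ 𝕏, where e_y denotes the standard basis vector at y ∈ 𝕏, and moreover sup_{𝐳 ∈ X_n} |f(𝐳)| ≤ ‖T‖ ≤ N^{n/2} · sup_{𝐳 ∈ X_n} |f(𝐳)|. -/
/-- `c : Fin (n+1) → X` (written `(x_n, …, x_0)` with `x_i = c i`) is a `γ`-chain of length `n`
if for each `i < n` there is an index `k` with `x_{i+1} = γ k (x_i)`. -/
def IsGammaChain {X : Type*} {N : ℕ} (γ : Fin N → X → X) (n : ℕ)
    (c : Fin (n + 1) → X) : Prop :=
  ∀ i : ℕ, ∀ h : i < n, ∃ k : Fin N, c ⟨i + 1, by omega⟩ = γ k (c ⟨i, by omega⟩)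

/-- For a tuple `𝐤 = (k_n, …, k_1)` (encoded as `k : Fin n → Fin N` with `k i = k_{i+1}`)
and `x : X`, `chainAux γ k x i` is the `i`-th entry `γ_{k_i} (⋯ (γ_{k_1} x))` of the chain
`𝛄_𝐤(x) = (γ_𝐤(x), …, γ_{k_1}(x), x)`. -/
def chainAux {X : Type*} {N : ℕ} (γ : Fin N → X → X) {n : ℕ} (k : Fin n → Fin N) (x : X) :
    ℕ → X
  | 0 => x
  | i + 1 => if h : i < n then γ (k ⟨i, h⟩) (chainAux γ k x i) else x

lemma chainAux_isGammaChain {X : Type*} {N : ℕ} (γ : Fin N → X → X) {n : ℕ}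
    (k : Fin n → Fin N) (x : X) :
    IsGammaChain γ n (fun i : Fin (n + 1) => chainAux γ k x i.1) := by
  intro i hi
  exact ⟨k ⟨i, hi⟩, by simp [chainAux, hi]⟩

lemma chainAux_mem {X : Type*} {N : ℕ} {γ : Fin N → X → X} {𝕏 : Set X}
    (hinv : CompletelyInvariant γ 𝕏) {n : ℕ} (k : Fin n → Fin N) {x : X} (hx : x ∈ 𝕏) :
    ∀ i : ℕ, chainAux γ k x i ∈ 𝕏 := by
  intro i
  induction i with
  | zero => exact hx
  | succ i ih =>
    simp only [chainAux]
    split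
    · exact (hinv _).1 ⟨_, ih, rfl⟩
    · exact hx

open Function
open scoped ENNReal

namespace lp

variable {𝕜 E : Type*} [NontriviallyNormedField 𝕜] [NormedAddCommGroup E] [NormedSpace 𝕜 E]
  {p : ℝ≥0∞} [Fact (1 ≤ p)] {ι α : Type*}

theorem hasSum_rpow_norm_extend_zero {Φ : ι → α} (hΦ : Injective Φ) (hp : p ≠ ∞)
    (u : lp (fun _ : ι => E) p) :
    HasSum (fun y => ‖extend Φ (⇑u) 0 y‖ ^ p.toReal) (‖u‖ ^ p.toReal) := by
  have hp' := (ENNReal.toReal_pos_iff_ne_top p).2 hp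
  have hcomp : (fun y => ‖extend Φ (⇑u) 0 y‖ ^ p.toReal) =
      extend Φ (fun i => ‖u i‖ ^ p.toReal) 0 := by
    ext y
    rw [apply_extend (fun a : E => ‖a‖ ^ p.toReal)]
    simp [comp_def, Real.zero_rpow hp'.ne']
    rfl
  rw [hcomp, hasSum_extend_zero hΦ, norm_rpow_eq_tsum hp']
  exact ((lp.memℓp u).summable hp').hasSum

noncomputable def extendZero {Φ : ι → α} (hΦ : Injective Φ) (hp : p ≠ ∞) :
    lp (fun _ : ι => E) p →ₗᵢ[𝕜] lp (fun _ : α => E) p where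
  toFun u := ⟨extend Φ u 0, memℓp_gen (hasSum_rpow_norm_extend_zero hΦ hp u).summable⟩
  map_add' u v := by
    ext1
    simp only [lp.coeFn_add]
    rw [← extend_add, add_zero]
  map_smul' c u := by
    ext1
    simp only [lp.coeFn_smul, RingHom.id_apply]
    rw [← extend_smul, smul_zero]
  norm_map' u := by
    have hp' := (ENNReal.toReal_pos_iff_ne_top p).2 hp
    rw [← Real.rpow_left_inj (norm_nonneg _) (norm_nonneg _) hp'.ne', norm_rpow_eq_tsum hp']
    exact (hasSum_rpow_norm_extend_zero hΦ hp u).tsum_eq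

variable {Φ : ι → α} (hΦ : Injective Φ) (hp : p ≠ ∞)

@[simp]
theorem coe_extendZero (u : lp (fun _ : ι => E) p) :
    ⇑(extendZero (𝕜 := 𝕜) hΦ hp u) = extend Φ (⇑u) 0 := rfl

theorem extendZero_single [DecidableEq ι] [DecidableEq α] (i : ι) (a : E) :
    extendZero (𝕜 := 𝕜) hΦ hp (lp.single p i a) = lp.single p (Φ i) a := by
  refine lp.ext (funext fun y => ?_)
  rw [coe_extendZero, lp.coeFn_single, lp.coeFn_single]
  by_cases hy : ∃ j, Φ j = y
  · obtain ⟨j, rfl⟩ := hy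
    simp only [hΦ.extend_apply, Pi.single_apply, hΦ.eq_iff]
  · rw [extend_apply' _ _ _ hy, Pi.single_eq_of_ne (fun h => hy ⟨i, h.symm⟩)]
    rfl

section replicateSMul

variable {κ : Type*}

theorem rpow_norm_smul_le {g : κ → α → 𝕜} {C : ℝ} (hg : ∀ k x, ‖g k x‖ ≤ C) {r : ℝ} (hr : 0 ≤ r)
    (v : α → E) (q : κ × α) : ‖g q.1 q.2 • v q.2‖ ^ r ≤ C ^ r * ‖v q.2‖ ^ r := by
  rw [norm_smul, Real.mul_rpow (norm_nonneg _) (norm_nonneg _)]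
  gcongr
  exact hg _ _

variable [Fintype κ]

theorem hasSum_rpow_norm_comp_snd (hp : p ≠ ∞) (v : lp (fun _ : α => E) p) :
    HasSum (fun q : κ × α => ‖v q.2‖ ^ p.toReal) (Fintype.card κ * ‖v‖ ^ p.toReal) := by
  have hp' := (ENNReal.toReal_pos_iff_ne_top p).2 hp
  have hv := (lp.memℓp v).summable hp'
  have hs : Summable fun q : κ × α => ‖v q.2‖ ^ p.toReal :=
    (summable_prod_of_nonneg fun _ => by positivity).mpr ⟨fun _ => hv, Summable.of_finite⟩
  convert hs.hasSum using 1
  rw [hs.tsum_prod' fun _ => hv, tsum_fintype, norm_rpow_eq_tsum hp']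
  simp

variable {g : κ → α → 𝕜} {C : ℝ}

theorem summable_rpow_norm_smul (hp : p ≠ ∞) (hg : ∀ k x, ‖g k x‖ ≤ C)
    (v : lp (fun _ : α => E) p) :
    Summable fun q : κ × α => ‖g q.1 q.2 • v q.2‖ ^ p.toReal :=
  ((hasSum_rpow_norm_comp_snd hp v).mul_left _).summable.of_nonneg_of_le
    (fun _ => by positivity) (rpow_norm_smul_le hg ((ENNReal.toReal_pos_iff_ne_top p).2 hp).le v)

theorem tsum_rpow_norm_smul_le (hp : p ≠ ∞) (hg : ∀ k x, ‖g k x‖ ≤ C)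
    (v : lp (fun _ : α => E) p) :
    ∑' q : κ × α, ‖g q.1 q.2 • v q.2‖ ^ p.toReal ≤
      Fintype.card κ * C ^ p.toReal * ‖v‖ ^ p.toReal := by
  calc _ ≤ C ^ p.toReal * (Fintype.card κ * ‖v‖ ^ p.toReal) :=
        hasSum_le (rpow_norm_smul_le hg ((ENNReal.toReal_pos_iff_ne_top p).2 hp).le v)
          (summable_rpow_norm_smul hp hg v).hasSum
          ((hasSum_rpow_norm_comp_snd hp v).mul_left _)
    _ = _ := by ring

variable (g) in
noncomputable def replicateSMul (hp : p ≠ ∞) (hC : 0 ≤ C) (hg : ∀ k x, ‖g k x‖ ≤ C) :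
    lp (fun _ : α => E) p →L[𝕜] lp (fun _ : κ × α => E) p :=
  LinearMap.mkContinuous
    { toFun v := ⟨fun q => g q.1 q.2 • v q.2,
        memℓp_gen (summable_rpow_norm_smul hp hg v)⟩
      map_add' u v := lp.ext (funext fun _ => smul_add _ _ _)
      map_smul' c v := lp.ext (funext fun _ => smul_comm _ _ _) }
    ((Fintype.card κ : ℝ) ^ p.toReal⁻¹ * C) fun v => by
      have hr := (ENNReal.toReal_pos_iff_ne_top p).2 hp
      refine lp.norm_le_of_tsum_le hr (by positivity) ((tsum_rpow_norm_smul_le hp hg v).trans_eq ?_)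
      rw [Real.mul_rpow (by positivity) (norm_nonneg _), Real.mul_rpow (by positivity) hC,
        Real.rpow_inv_rpow (Nat.cast_nonneg _) hr.ne']

variable (hp : p ≠ ∞) (hC : 0 ≤ C) (hg : ∀ k x, ‖g k x‖ ≤ C)

@[simp]
theorem replicateSMul_apply (v : lp (fun _ : α => E) p) (q : κ × α) :
    replicateSMul g hp hC hg v q = g q.1 q.2 • v q.2 := rfl

theorem norm_replicateSMul_le :
    ‖(replicateSMul (E := E) g hp hC hg)‖ ≤
      (Fintype.card κ : ℝ) ^ p.toReal⁻¹ * C :=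
  LinearMap.mkContinuous_norm_le _ (by positivity) _

theorem replicateSMul_single [DecidableEq κ] [DecidableEq α] (x : α) (a : E) :
    replicateSMul g hp hC hg (lp.single p x a) = ∑ k, lp.single p (k, x) (g k x • a) := by
  refine lp.ext (funext fun q => ?_)
  rw [lp.coeFn_sum, Finset.sum_apply, Finset.sum_eq_single q.1]
  · obtain ⟨k, y⟩ := q
    by_cases hy : y = x <;> simp [hy]
  · intro k _ hk
    exact Pi.single_eq_of_ne (fun h => hk (congrArg Prod.fst h).symm) _
  · simp

end replicateSMul

section weightedShift

variable {κ β : Type*} [Fintype κ]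

noncomputable def weightedShift {σ : κ × α → β} (hσ : Injective σ) (g : κ → α → 𝕜) (hp : p ≠ ∞)
    {C : ℝ} (hC : 0 ≤ C) (hg : ∀ k x, ‖g k x‖ ≤ C) :
    lp (fun _ : α => E) p →L[𝕜] lp (fun _ : β => E) p :=
  (extendZero hσ hp).toContinuousLinearMap ∘L replicateSMul g hp hC hg

variable {σ : κ × α → β} (hσ : Injective σ) {g : κ → α → 𝕜} (hp : p ≠ ∞) {C : ℝ} (hC : 0 ≤ C)
  (hg : ∀ k x, ‖g k x‖ ≤ C)

theorem weightedShift_apply_apply (v : lp (fun _ : α => E) p) (k : κ) (x : α) :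
    weightedShift hσ g hp hC hg v (σ (k, x)) = g k x • v x := by
  simp [weightedShift, hσ.extend_apply]

theorem weightedShift_single [DecidableEq κ] [DecidableEq α] [DecidableEq β] (x : α) (a : E) :
    weightedShift hσ g hp hC hg (lp.single p x a) = ∑ k, g k x • lp.single p (σ (k, x)) a := by
  simp [weightedShift, replicateSMul_single, extendZero_single, lp.single_smul]

theorem norm_weightedShift_le :
    ‖(weightedShift (E := E) hσ g hp hC hg)‖ ≤ (Fintype.card κ : ℝ) ^ p.toReal⁻¹ * C :=
  calc _ ≤ ‖(extendZero (E := E) (𝕜 := 𝕜) hσ hp).toContinuousLinearMap‖ *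
        ‖(replicateSMul (E := E) g hp hC hg)‖ := ContinuousLinearMap.opNorm_comp_le _ _
    _ ≤ 1 * ((Fintype.card κ : ℝ) ^ p.toReal⁻¹ * C) := by
        gcongr
        · exact LinearIsometry.norm_toContinuousLinearMap_le _
        · exact norm_replicateSMul_le hp hC hg
    _ = _ := one_mul _

end weightedShift

theorem norm_apply_single_le {β F : Type*} [NormedAddCommGroup F] [NormedSpace 𝕜 F]
    [DecidableEq α] (T : lp (fun _ : α => E) p →L[𝕜] lp (fun _ : β => F) p)
    (x : α) (a : E) (y : β) : ‖T (lp.single p x a) y‖ ≤ ‖T‖ * ‖a‖ := by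
  have hp : 0 < p := zero_lt_one.trans_le Fact.out
  calc _ ≤ ‖T (lp.single p x a)‖ := lp.norm_apply_le_norm hp.ne' _ y
    _ ≤ ‖T‖ * ‖lp.single (E := fun _ : α => E) p x a‖ := T.le_opNorm _
    _ = ‖T‖ * ‖a‖ := by rw [lp.norm_single (E := fun _ : α => E) hp]

end lp

section Chains

variable {X : Type*} {N : ℕ} {γ : Fin N → X → X}

theorem chainAux_init {n : ℕ} (k : Fin (n + 1) → Fin N) (x : X) {i : ℕ} (hi : i ≤ n) :
    chainAux γ (Fin.init k) x i = chainAux γ k x i := by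
  induction i with
  | zero => rfl
  | succ i ih =>
    have hi' : i < n := hi
    simp only [chainAux, dif_pos hi', dif_pos (Nat.lt_succ_of_lt hi'), ih hi'.le]
    rfl

theorem injOn_chainAux {𝕏 : Set X} (hinv : CompletelyInvariant γ 𝕏)
    (hdisj : ∀ j k : Fin N, j ≠ k → Disjoint (γ j '' 𝕏) (γ k '' 𝕏))
    (hinj : ∀ k : Fin N, Set.InjOn (γ k) 𝕏) (n : ℕ) :
    Set.InjOn (fun q : (Fin n → Fin N) × X => chainAux γ q.1 q.2 n) (Set.univ ×ˢ 𝕏) := by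
  induction n with
  | zero =>
    rintro ⟨k, x⟩ ⟨-, hx⟩ ⟨k', x'⟩ ⟨-, hx'⟩ h
    exact Prod.ext (Subsingleton.elim _ _) h
  | succ n ih =>
    rintro ⟨k, x⟩ ⟨-, hx⟩ ⟨k', x'⟩ ⟨-, hx'⟩ h
    have hn : n < n + 1 := n.lt_succ_self
    simp only [chainAux, dif_pos hn] at h
    have ha := chainAux_mem hinv k hx n
    have ha' := chainAux_mem hinv k' hx' n
    have hlast : k (Fin.last n) = k' (Fin.last n) := by
      by_contra hne
      exact Set.disjoint_left.mp (hdisj _ _ hne) ⟨_, ha, rfl⟩ ⟨_, ha', h.symm⟩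
    rw [show (⟨n, hn⟩ : Fin (n + 1)) = Fin.last n from rfl, hlast] at h
    have hprev := hinj _ ha ha' h
    rw [← chainAux_init k x le_rfl, ← chainAux_init k' x' le_rfl] at hprev
    obtain ⟨hinit, rfl⟩ := Prod.ext_iff.mp <|
      ih (x₁ := (Fin.init k, x)) (x₂ := (Fin.init k', x')) ⟨trivial, hx⟩ ⟨trivial, hx'⟩ hprev
    refine Prod.ext (funext fun j => Fin.lastCases hlast (fun j => congrFun hinit j) j) rfl

theorem continuous_chainAux [TopologicalSpace X] (hγ : ∀ k, Continuous (γ k)) {n : ℕ}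
    (k : Fin n → Fin N) (i : ℕ) : Continuous fun x => chainAux γ k x i := by
  induction i with
  | zero => exact continuous_id
  | succ i ih =>
    by_cases h : i < n
    · simp only [chainAux, dif_pos h]
      exact (hγ _).comp ih
    · simp only [chainAux, dif_neg h]
      exact continuous_id

theorem IsGammaChain.exists_eq_chainAux {n : ℕ} {c : Fin (n + 1) → X}
    (hc : IsGammaChain γ n c) :
    ∃ k : Fin n → Fin N, ∀ i : Fin (n + 1), c i = chainAux γ k (c 0) i := by
  refine ⟨fun j => (hc j.1 j.2).choose, fun i => ?_⟩
  obtain ⟨i, hi⟩ := i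
  induction i with
  | zero => rfl
  | succ i ih =>
    have hi' : i < n := Nat.lt_of_succ_lt_succ hi
    simp only [chainAux, dif_pos hi']
    rw [← ih (by omega)]
    exact (hc i hi').choose_spec

theorem isClosed_setOf_isGammaChain [TopologicalSpace X] [T2Space X]
    (hγ : ∀ k, Continuous (γ k)) (n : ℕ) :
    IsClosed {c : Fin (n + 1) → X | IsGammaChain γ n c} := by
  have hset : {c : Fin (n + 1) → X | IsGammaChain γ n c} =
      ⋂ i : Fin n, ⋃ k : Fin N, {c | c i.succ = γ k (c i.castSucc)} := by
    ext c
    simp only [Set.mem_ofPred_eq, Set.mem_iInter, Set.mem_iUnion]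
    exact ⟨fun h i => h i.1 i.2, fun h i hi => h ⟨i, hi⟩⟩
  rw [hset]
  exact isClosed_iInter fun i => isClosed_iUnion_of_finite fun k =>
    isClosed_eq (continuous_apply _) ((hγ k).comp (continuous_apply _))

theorem le_of_forall_chainAux_le [TopologicalSpace X] (hγ : ∀ k, Continuous (γ k)) {𝕏 : Set X}
    (hdense : Dense 𝕏) {n : ℕ} {F : {c : Fin (n + 1) → X // IsGammaChain γ n c} → ℝ}
    (hF : Continuous F) {b : ℝ}
    (hb : ∀ k, ∀ x ∈ 𝕏, F ⟨fun i => chainAux γ k x i, chainAux_isGammaChain γ k x⟩ ≤ b)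
    (z : {c : Fin (n + 1) → X // IsGammaChain γ n c}) : F z ≤ b := by
  obtain ⟨k, hk⟩ := z.2.exists_eq_chainAux
  have hz : z = ⟨fun i => chainAux γ k (z.1 0) i, chainAux_isGammaChain γ k _⟩ :=
    Subtype.ext (funext hk)
  have hcont : Continuous fun x => F ⟨fun i => chainAux γ k x i, chainAux_isGammaChain γ k x⟩ :=
    hF.comp ((continuous_pi fun i : Fin (n + 1) => continuous_chainAux hγ k i).subtype_mk _)
  rw [hz]
  exact le_on_closure (hb k) hcont.continuousOn continuousOn_const (hdense.closure_eq ▸ trivial)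

end Chains

/-- Lemma 5.2.1 (the operator `ρ_n(f)`): for every continuous `f : X_n → ℂ` there is a
bounded operator `T` on `ℓ²(𝕏, ℂ)` with `T e_x = Σ_{𝐤} f(𝛄_𝐤(x)) e_{γ_𝐤(x)}` for `x ∈ 𝕏`,
and `sup |f| ≤ ‖T‖ ≤ N^{n/2} · sup |f|`. -/
theorem exists_rho_n {X : Type*} [TopologicalSpace X] [CompactSpace X] [T2Space X] {N : ℕ}
    (γ : Fin N → X → X) (hemb : ∀ k, Topology.IsEmbedding (γ k))
    (𝕏 : Set X) (hdense : Dense 𝕏) (hinv : CompletelyInvariant γ 𝕏)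
    (hdisj : ∀ j k : Fin N, j ≠ k → Disjoint (γ j '' 𝕏) (γ k '' 𝕏))
    (hinj : ∀ k : Fin N, Set.InjOn (γ k) 𝕏)
    (n : ℕ) (f : C({c : Fin (n + 1) → X // IsGammaChain γ n c}, ℂ)) :
    haveI : DecidableEq ↥𝕏 := Classical.decEq _
    ∃ T : lp (fun _ : 𝕏 => ℂ) 2 →L[ℂ] lp (fun _ : 𝕏 => ℂ) 2,
      (∀ x : 𝕏, T (lp.single 2 x 1) =
        ∑ k : Fin n → Fin N,
          f ⟨fun i => chainAux γ k x.1 i.1, chainAux_isGammaChain γ k x.1⟩ •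
            lp.single 2 (⟨chainAux γ k x.1 n, chainAux_mem hinv k x.2 n⟩ : 𝕏) 1) ∧
      (⨆ z : {c : Fin (n + 1) → X // IsGammaChain γ n c}, ‖f z‖) ≤ ‖T‖ ∧
      ‖T‖ ≤ (N : ℝ) ^ ((n : ℝ) / 2) *
        ⨆ z : {c : Fin (n + 1) → X // IsGammaChain γ n c}, ‖f z‖ := by
  let : DecidableEq 𝕏 := Classical.decEq _
  have hγ k := (hemb k).continuous
  have : CompactSpace {c : Fin (n + 1) → X // IsGammaChain γ n c} :=
    isCompact_iff_compactSpace.mp (isClosed_setOf_isGammaChain hγ n).isCompact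
  have hfC z : ‖f z‖ ≤ ⨆ z, ‖f z‖ :=
    le_ciSup (isCompact_range (continuous_norm.comp f.continuous)).bddAbove z
  let σ (q : (Fin n → Fin N) × 𝕏) : 𝕏 := ⟨chainAux γ q.1 q.2 n, chainAux_mem hinv q.1 q.2.2 n⟩
  have hσ : Injective σ := by
    rintro ⟨k, x⟩ ⟨k', x'⟩ h
    obtain ⟨rfl, hx⟩ := Prod.ext_iff.mp <| injOn_chainAux hinv hdisj hinj n
      (x₁ := (k, x.1)) (x₂ := (k', x'.1)) ⟨trivial, x.2⟩ ⟨trivial, x'.2⟩ (congrArg Subtype.val h)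
    rw [Subtype.ext hx]
  let g k (x : 𝕏) := f ⟨fun i => chainAux γ k x.1 i, chainAux_isGammaChain γ k x.1⟩
  let T := lp.weightedShift (E := ℂ) (p := 2) hσ g ENNReal.ofNat_ne_top
    (Real.iSup_nonneg fun _ => norm_nonneg _) fun _ _ => hfC _
  refine ⟨T, fun x => lp.weightedShift_single .., Real.iSup_le (fun z => ?_) (norm_nonneg _), ?_⟩
  · refine le_of_forall_chainAux_le hγ hdense (continuous_norm.comp f.continuous)
      (fun k x hx => ?_) z
    simpa [T, lp.weightedShift_apply_apply] using
      lp.norm_apply_single_le T ⟨x, hx⟩ 1 (σ (k, ⟨x, hx⟩))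
  · refine (lp.norm_weightedShift_le ..).trans_eq ?_
    rw [Fintype.card_fun, Fintype.card_fin, Fintype.card_fin, Nat.cast_pow, ENNReal.toReal_ofNat,
      ← Real.rpow_natCast, ← Real.rpow_mul (Nat.cast_nonneg _), div_eq_mul_inv]
end

section
/- Let C ⊆ ℝ be the Cantor ternary set and define γ_1, γ_2 by γ_1(x) := x/3 and γ_2(x) := x/3 + 2/3. Then γ_1 and γ_2 map C into C, the images γ_1(C) and γ_2(C) are disjoint, and the iterated function system γ = (γ_1, γ_2) on C is essentially free: for all distinct finite sequences 𝐤 and 𝐥 of indices in {1, 2}, the set {x ∈ C : γ_𝐤(x) = γ_𝐥(x)} is nowhere dense in C. -/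
lemma div_three_mem_cantorSet {x : ℝ} (hx : x ∈ cantorSet) : x / 3 ∈ cantorSet := by
  rw [cantorSet, Set.mem_iInter] at hx ⊢
  intro n
  match n with
  | 0 =>
    have h0 := hx 0
    simp only [preCantorSet_zero, Set.mem_Icc] at h0 ⊢
    constructor <;> linarith [h0.1, h0.2]
  | n + 1 =>
    rw [preCantorSet_succ]
    exact Set.mem_union_left _ ⟨x, hx n, rfl⟩

lemma div_three_add_mem_cantorSet {x : ℝ} (hx : x ∈ cantorSet) :
    x / 3 + 2 / 3 ∈ cantorSet := by
  rw [cantorSet, Set.mem_iInter] at hx ⊢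
  intro n
  match n with
  | 0 =>
    have h0 := hx 0
    simp only [preCantorSet_zero, Set.mem_Icc] at h0 ⊢
    constructor <;> linarith [h0.1, h0.2]
  | n + 1 =>
    rw [preCantorSet_succ]
    exact Set.mem_union_right _ ⟨x, hx n, by ring⟩

/-- The map `x ↦ x / 3` on the Cantor ternary set. -/
noncomputable def cantorOne : ↥cantorSet → ↥cantorSet :=
  fun x => ⟨x.1 / 3, div_three_mem_cantorSet x.2⟩

/-- The map `x ↦ x / 3 + 2 / 3` on the Cantor ternary set. -/
noncomputable def cantorTwo : ↥cantorSet → ↥cantorSet :=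
  fun x => ⟨x.1 / 3 + 2 / 3, div_three_add_mem_cantorSet x.2⟩
/-!
The maps `γ₁, γ₂` are injective `1/3`-contractions of `C` whose ranges are disjoint and cover `C`.
For distinct words, injectivity strips their common outermost letters; if the remaining words then
start with different letters, the coincidence set is empty by disjointness of the ranges, and
otherwise one of them is empty and the coincidence set consists of fixed points of a contraction,
so it has at most one point. A point is nowhere dense because `C` has no isolated points: since the
ranges cover `C`, every `x ∈ C` equals `γ_𝐤 y` for words `𝐤` of any length `n`, and `γ_𝐤 '' C` is
a set of at least two points within `3⁻ⁿ` of `x`.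
-/

open Function Set NNReal

lemma Set.Subsingleton.isNowhereDense {X : Type*} [TopologicalSpace X] [T1Space X] [PerfectSpace X]
    {s : Set X} (hs : s.Subsingleton) : IsNowhereDense s := by
  obtain rfl | ⟨x, rfl⟩ := hs.eq_empty_or_singleton
  · exact isNowhereDense_empty
  · exact isClosed_singleton.isNowhereDense_iff.2 (interior_singleton x)

section IteratedFunctionSystem

variable {X : Type*} {N : ℕ} {γ : Fin N → X → X}

@[simp] lemma seqComp_nil : seqComp γ [] = id := rfl

@[simp] lemma seqComp_cons (i : Fin N) (l : List (Fin N)) :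
    seqComp γ (i :: l) = γ i ∘ seqComp γ l := rfl

lemma seqComp_injective (hinj : ∀ i, Injective (γ i)) (l : List (Fin N)) :
    Injective (seqComp γ l) := by
  induction l with
  | nil => exact injective_id
  | cons i l ih => exact (hinj i).comp ih

lemma exists_seqComp_eq_of_length (hcover : ∀ x, ∃ i, x ∈ range (γ i)) (n : ℕ) (x : X) :
    ∃ l : List (Fin N), l.length = n ∧ ∃ y, seqComp γ l y = x := by
  induction n generalizing x with
  | zero => exact ⟨[], rfl, x, rfl⟩
  | succ n ih =>
    obtain ⟨i, x', rfl⟩ := hcover x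
    obtain ⟨l, hl, y, rfl⟩ := ih x'
    exact ⟨i :: l, by simp [hl], y, rfl⟩

variable [MetricSpace X] {K : ℝ≥0}

lemma lipschitzWith_seqComp (hγ : ∀ i, LipschitzWith K (γ i)) (l : List (Fin N)) :
    LipschitzWith (K ^ l.length) (seqComp γ l) := by
  induction l with
  | nil => simpa using LipschitzWith.id
  | cons i l ih => simpa [pow_succ'] using (hγ i).comp ih

lemma subsingleton_fixedPoints_seqComp (hK : K < 1) (hγ : ∀ i, LipschitzWith K (γ i))
    {l : List (Fin N)} (hl : l ≠ []) : {x | x = seqComp γ l x}.Subsingleton := by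
  have hcontr : ContractingWith (K ^ l.length) (seqComp γ l) :=
    ⟨pow_lt_one₀ K.2 hK (List.length_pos_iff.2 hl).ne', lipschitzWith_seqComp hγ l⟩
  exact fun x hx y hy => hcontr.fixedPoint_unique' hx.symm hy.symm

theorem subsingleton_setOf_seqComp_eq (hK : K < 1) (hγ : ∀ i, LipschitzWith K (γ i))
    (hinj : ∀ i, Injective (γ i)) (hdisj : Pairwise (Disjoint on fun i => range (γ i))) :
    ∀ {k l : List (Fin N)}, k ≠ l → {x | seqComp γ k x = seqComp γ l x}.Subsingleton
  | [], [], h => absurd rfl h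
  | [], _ :: _, _ => subsingleton_fixedPoints_seqComp hK hγ (List.cons_ne_nil _ _)
  | _ :: _, [], _ => by
    simpa only [seqComp_nil, id_eq, eq_comm] using
      subsingleton_fixedPoints_seqComp hK hγ (List.cons_ne_nil _ _)
  | i :: k, j :: l, h => by
    obtain rfl | hij := eq_or_ne i j
    · simpa only [seqComp_cons, comp_apply, (hinj i).eq_iff] using
        subsingleton_setOf_seqComp_eq hK hγ hinj hdisj (fun hkl => h (congrArg _ hkl))
    · convert subsingleton_empty
      exact eq_empty_of_forall_notMem fun x hx =>
        (hdisj hij).ne_of_mem (mem_range_self _) (mem_range_self _) hx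

theorem perfectSpace_of_lipschitzWith_of_cover [BoundedSpace X] [Nontrivial X] (hK : K < 1)
    (hγ : ∀ i, LipschitzWith K (γ i)) (hinj : ∀ i, Injective (γ i))
    (hcover : ∀ x, ∃ i, x ∈ range (γ i)) : PerfectSpace X := by
  refine ⟨preperfect_iff_nhds.2 fun x _ U hU => ?_⟩
  obtain ⟨ε, hε, hball⟩ := Metric.mem_nhds_iff.1 hU
  obtain ⟨D, hD⟩ := Metric.isBounded_iff.1 (Bornology.isBounded_univ.2 ‹BoundedSpace X›)
  obtain ⟨a, b, hab⟩ := exists_pair_ne X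
  have hD0 : 0 ≤ D := dist_nonneg.trans (hD (mem_univ a) (mem_univ a))
  obtain ⟨n, hn⟩ :=
    exists_pow_lt_of_lt_one (div_pos hε (by positivity : 0 < D + 1)) (NNReal.coe_lt_one.2 hK)
  obtain ⟨l, rfl, y, rfl⟩ := exists_seqComp_eq_of_length hcover n x
  have hclose : ∀ z, seqComp γ l z ∈ U := fun z => hball <| by
    calc dist (seqComp γ l z) (seqComp γ l y)
        ≤ K ^ l.length * dist z y := mod_cast (lipschitzWith_seqComp hγ l).dist_le_mul z y
      _ ≤ ε / (D + 1) * D := by gcongr; exact hD (mem_univ z) (mem_univ y)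
      _ < ε / (D + 1) * (D + 1) := by gcongr; linarith
      _ = ε := div_mul_cancel₀ ε (by positivity)
  by_cases ha : seqComp γ l a = seqComp γ l y
  · exact ⟨_, ⟨hclose b, mem_univ _⟩, fun hb => hab (seqComp_injective hinj l (ha.trans hb.symm))⟩
  · exact ⟨_, ⟨hclose a, mem_univ _⟩, ha⟩

end IteratedFunctionSystem

section CantorSet

lemma disjoint_image_div_three_cantorSet :
    Disjoint ((fun x : ℝ => x / 3) '' cantorSet) ((fun x : ℝ => x / 3 + 2 / 3) '' cantorSet) := by
  rw [disjoint_left]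
  rintro _ ⟨x, hx, rfl⟩ ⟨y, hy, hxy⟩
  linarith [(cantorSet_subset_unitInterval hx).2, (cantorSet_subset_unitInterval hy).1]

instance : CompactSpace cantorSet := isCompact_iff_compactSpace.1 isCompact_cantorSet

instance : Nontrivial cantorSet :=
  ⟨⟨0, zero_mem_cantorSet⟩, ⟨1 / 4, quarter_mem_cantorSet⟩, by simp [Subtype.ext_iff]⟩

lemma dist_div_three_add (x y c : ℝ) : dist (x / 3 + c) (y / 3 + c) = 3⁻¹ * dist x y := by
  rw [dist_add_right, Real.dist_eq, Real.dist_eq, show x / 3 - y / 3 = 3⁻¹ * (x - y) by ring,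
    abs_mul, abs_of_pos (by norm_num : (0 : ℝ) < 3⁻¹)]

lemma lipschitzWith_cantorOne : LipschitzWith 3⁻¹ cantorOne :=
  LipschitzWith.of_dist_le_mul fun x y => by
    simpa [cantorOne, Subtype.dist_eq] using (dist_div_three_add x y 0).le

lemma lipschitzWith_cantorTwo : LipschitzWith 3⁻¹ cantorTwo :=
  LipschitzWith.of_dist_le_mul fun x y => by
    simpa [cantorTwo, Subtype.dist_eq] using (dist_div_three_add x y (2 / 3)).le

lemma cantorOne_injective : Injective cantorOne := fun x y h => by
  simpa [cantorOne, Subtype.ext_iff] using h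

lemma cantorTwo_injective : Injective cantorTwo := fun x y h => by
  simpa [cantorTwo, Subtype.ext_iff] using h

lemma disjoint_range_cantorOne_cantorTwo : Disjoint (range cantorOne) (range cantorTwo) := by
  refine (disjoint_image_div_three_cantorSet.preimage Subtype.val).mono ?_ ?_ <;>
    rintro _ ⟨x, rfl⟩ <;> exact ⟨x, x.2, rfl⟩

lemma range_cantorOne_union_range_cantorTwo : range cantorOne ∪ range cantorTwo = univ := by
  refine eq_univ_of_forall fun ⟨x, hx⟩ => ?_
  rw [cantorSet_eq_union_halves] at hx
  rcases hx with ⟨y, hy, rfl⟩ | ⟨y, hy, rfl⟩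
  · exact Or.inl ⟨⟨y, hy⟩, rfl⟩
  · exact Or.inr ⟨⟨y, hy⟩, Subtype.ext (by simp only [cantorTwo]; ring)⟩

end CantorSet

/-- Example 6.1.7: `x ↦ x/3` and `x ↦ x/3 + 2/3` map the Cantor ternary set into itself,
their images are disjoint, and the resulting iterated function system on the Cantor set is
essentially free. -/
theorem cantor_ifs_essentiallyFree :
    (∀ x ∈ cantorSet, x / 3 ∈ cantorSet) ∧
      (∀ x ∈ cantorSet, x / 3 + 2 / 3 ∈ cantorSet) ∧
      Disjoint ((fun x : ℝ => x / 3) '' cantorSet) ((fun x : ℝ => x / 3 + 2 / 3) '' cantorSet) ∧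
      EssentiallyFree ![cantorOne, cantorTwo] := by
  have hK : (3⁻¹ : ℝ≥0) < 1 := by norm_num
  have hγ : ∀ i, LipschitzWith 3⁻¹ (![cantorOne, cantorTwo] i) :=
    Fin.forall_fin_two.2 ⟨lipschitzWith_cantorOne, lipschitzWith_cantorTwo⟩
  have hinj : ∀ i, Injective (![cantorOne, cantorTwo] i) :=
    Fin.forall_fin_two.2 ⟨cantorOne_injective, cantorTwo_injective⟩
  have hdisj : Pairwise (Disjoint on fun i => range (![cantorOne, cantorTwo] i)) := by
    simp [Pairwise, Fin.forall_fin_two, onFun, disjoint_range_cantorOne_cantorTwo,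
      disjoint_range_cantorOne_cantorTwo.symm]
  have hcover : ∀ x, ∃ i, x ∈ range (![cantorOne, cantorTwo] i) := fun x => by
    simpa [Fin.exists_fin_two] using range_cantorOne_union_range_cantorTwo.ge (mem_univ x)
  have := perfectSpace_of_lipschitzWith_of_cover hK hγ hinj hcover
  exact ⟨fun _ => div_three_mem_cantorSet, fun _ => div_three_add_mem_cantorSet,
    disjoint_image_div_three_cantorSet,
    fun _ _ hkl => (subsingleton_setOf_seqComp_eq hK hγ hinj hdisj hkl).isNowhereDense⟩
end
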